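/- arXiv:2305.05520 — 2 statements merged into one kernel-verified Lean document; each statement's English description precedes it below -/
import Mathlib

section
/- Fix α_1>0, α_2>0 and for ρ ∈ (−1, min(√(α_2/α_1), √(α_1/α_2))) define γ(ρ) = (α_1+α_2−2ρ√(α_1 α_2))/(1−ρ^2). Then: (i) if ρ<0 then γ(ρ) > α_1+α_2; (ii) if ρ=0 then γ(ρ) = α_1+α_2; (iii) if 0 < ρ < min(√(α_2/α_1), √(α_1/α_2)) then max(α_1,α_2) < γ(ρ) < α_1+α_2; (iv) as ρ ↑ min(√(α_2/α_1), √(α_1/α_2)), γ(ρ) → max(α_1,α_2), i.e., at ρ = min(√(α_2/α_1), √(α_1/α_2)) the expression (α_1+α_2−2ρ√(α_1 α_2))/(1−ρ^2) equals max(α_1,α_2) when α_1 ≠ α_2. -/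
/-!
Writing `s₁ = √α₁`, `s₂ = √α₂`, the numerator of `γ(ρ)` is `s₁² + s₂² − 2ρ s₁ s₂`, so completing
the square gives `γ(ρ) − α₁ = (s₂ − ρ s₁)² / (1 − ρ²)` and `γ(ρ) − α₂ = (s₁ − ρ s₂)² / (1 − ρ²)`:
`γ` exceeds `max(α₁, α₂)` except at `ρ = min(s₂/s₁, s₁/s₂)`, where one square vanishes. Likewise
`γ(ρ) − (α₁ + α₂) = ρ (ρ (α₁ + α₂) − 2 s₁ s₂) / (1 − ρ²)`, whose sign is that of `−ρ` on the
range considered.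
-/

open Filter Real

noncomputable def jointTailIndex (α₁ α₂ ρ : ℝ) : ℝ :=
  (α₁ + α₂ - 2 * ρ * √(α₁ * α₂)) / (1 - ρ ^ 2)

section JointTailIndex

variable {α₁ α₂ ρ : ℝ}

lemma jointTailIndex_comm (α₁ α₂ : ℝ) : jointTailIndex α₂ α₁ = jointTailIndex α₁ α₂ := by
  funext ρ
  simp only [jointTailIndex, add_comm α₂, mul_comm α₂]

lemma jointTailIndex_zero (α₁ α₂ : ℝ) : jointTailIndex α₁ α₂ 0 = α₁ + α₂ := by
  simp [jointTailIndex]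

lemma continuousAt_jointTailIndex (α₁ α₂ : ℝ) (hρ : ρ ^ 2 ≠ 1) :
    ContinuousAt (jointTailIndex α₁ α₂) ρ :=
  (by fun_prop : Continuous fun ρ : ℝ => α₁ + α₂ - 2 * ρ * √(α₁ * α₂)).continuousAt.div
    (by fun_prop) (sub_ne_zero.2 hρ.symm)

lemma jointTailIndex_sub_left (h₁ : 0 ≤ α₁) (h₂ : 0 ≤ α₂) (hρ : ρ ^ 2 ≠ 1) :
    jointTailIndex α₁ α₂ ρ - α₁ = (√α₂ - ρ * √α₁) ^ 2 / (1 - ρ ^ 2) := by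
  have hden : 1 - ρ ^ 2 ≠ 0 := sub_ne_zero.2 hρ.symm
  rw [jointTailIndex, sqrt_mul h₁, eq_div_iff hden, sub_mul, div_mul_cancel₀ _ hden]
  linear_combination -sq_sqrt h₂ - ρ ^ 2 * sq_sqrt h₁

lemma jointTailIndex_sub_add (hρ : ρ ^ 2 ≠ 1) :
    jointTailIndex α₁ α₂ ρ - (α₁ + α₂) =
      ρ * (ρ * (α₁ + α₂) - 2 * √(α₁ * α₂)) / (1 - ρ ^ 2) := by
  have hden : 1 - ρ ^ 2 ≠ 0 := sub_ne_zero.2 hρ.symm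
  rw [jointTailIndex, eq_div_iff hden, sub_mul, div_mul_cancel₀ _ hden]
  ring

lemma left_lt_jointTailIndex (h₁ : 0 ≤ α₁) (h₂ : 0 ≤ α₂) (hρ : ρ ^ 2 < 1)
    (hne : ρ * √α₁ ≠ √α₂) : α₁ < jointTailIndex α₁ α₂ ρ := by
  rw [← sub_pos, jointTailIndex_sub_left h₁ h₂ hρ.ne]
  exact div_pos (sq_pos_of_ne_zero (sub_ne_zero.2 hne.symm)) (sub_pos.2 hρ)

lemma right_lt_jointTailIndex (h₁ : 0 ≤ α₁) (h₂ : 0 ≤ α₂) (hρ : ρ ^ 2 < 1)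
    (hne : ρ * √α₂ ≠ √α₁) : α₂ < jointTailIndex α₁ α₂ ρ := by
  rw [← jointTailIndex_comm]
  exact left_lt_jointTailIndex h₂ h₁ hρ hne

lemma add_lt_jointTailIndex (h₁ : 0 < α₁) (h₂ : 0 < α₂) (hρ₁ : -1 < ρ) (hρ₀ : ρ < 0) :
    α₁ + α₂ < jointTailIndex α₁ α₂ ρ := by
  have hρ : ρ ^ 2 < 1 := by nlinarith
  rw [← sub_pos, jointTailIndex_sub_add hρ.ne]
  refine div_pos (mul_pos_of_neg_of_neg hρ₀ ?_) (sub_pos.2 hρ)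
  nlinarith [sqrt_nonneg (α₁ * α₂)]

lemma jointTailIndex_lt_add (hρ₀ : 0 < ρ) (hρ : ρ ^ 2 < 1)
    (h : ρ * (α₁ + α₂) < 2 * √(α₁ * α₂)) : jointTailIndex α₁ α₂ ρ < α₁ + α₂ := by
  rw [← sub_neg, jointTailIndex_sub_add hρ.ne]
  exact div_neg_of_neg_of_pos (mul_neg_of_pos_of_neg hρ₀ (sub_neg.2 h)) (sub_pos.2 hρ)

lemma mul_sqrt_lt_sqrt_of_lt_sqrt_div (h₁ : 0 < α₁) (h : ρ < √(α₂ / α₁)) :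
    ρ * √α₁ < √α₂ := by
  rwa [sqrt_div' _ h₁.le, lt_div_iff₀ (sqrt_pos.2 h₁)] at h

lemma sq_lt_one_of_mul_sqrt_lt (hρ : 0 < ρ) (hl : ρ * √α₁ < √α₂) (hr : ρ * √α₂ < √α₁) :
    ρ ^ 2 < 1 := by
  have hρ₁ : ρ < 1 := by
    by_contra! h
    nlinarith [sqrt_nonneg α₁, sqrt_nonneg α₂]
  nlinarith

lemma mul_add_lt_two_sqrt_mul (h₁ : 0 < α₁) (h₂ : 0 < α₂) (hl : ρ * √α₁ < √α₂)
    (hr : ρ * √α₂ < √α₁) : ρ * (α₁ + α₂) < 2 * √(α₁ * α₂) := by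
  have hs₁ := sqrt_pos.2 h₁
  have hs₂ := sqrt_pos.2 h₂
  calc ρ * (α₁ + α₂) = ρ * √α₁ * √α₁ + ρ * √α₂ * √α₂ := by
          rw [mul_assoc, mul_assoc, mul_self_sqrt h₁.le, mul_self_sqrt h₂.le, mul_add]
    _ < √α₂ * √α₁ + √α₁ * √α₂ := add_lt_add (by gcongr) (by gcongr)
    _ = 2 * √(α₁ * α₂) := by rw [sqrt_mul h₁.le]; ring

lemma min_sqrt_div_eq_left (h₂ : 0 < α₂) (h : α₂ ≤ α₁) :
    min √(α₂ / α₁) √(α₁ / α₂) = √(α₂ / α₁) :=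
  min_eq_left <| sqrt_le_sqrt <|
    (div_le_one_of_le₀ h (h₂.trans_le h).le).trans ((one_le_div h₂).2 h)

lemma jointTailIndex_sqrt_div (h₁ : 0 < α₁) (h₂ : 0 ≤ α₂) (hρ : α₂ / α₁ ≠ 1) :
    jointTailIndex α₁ α₂ √(α₂ / α₁) = α₁ := by
  have hsq : √(α₂ / α₁) ^ 2 ≠ 1 := by rwa [sq_sqrt (div_nonneg h₂ h₁.le)]
  rw [← sub_eq_zero, jointTailIndex_sub_left h₁.le h₂ hsq, sqrt_div' _ h₁.le,
    div_mul_cancel₀ _ (sqrt_pos.2 h₁).ne', sub_self, zero_pow two_ne_zero, zero_div]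

lemma jointTailIndex_min_sqrt_div (h₁ : 0 < α₁) (h₂ : 0 < α₂) (hne : α₁ ≠ α₂) :
    ContinuousAt (jointTailIndex α₁ α₂) (min √(α₂ / α₁) √(α₁ / α₂)) ∧
      jointTailIndex α₁ α₂ (min √(α₂ / α₁) √(α₁ / α₂)) = max α₁ α₂ := by
  wlog h : α₂ < α₁ generalizing α₁ α₂
  · have := this h₂ h₁ hne.symm (lt_of_le_of_ne (not_lt.1 h) hne)
    rwa [min_comm, max_comm, jointTailIndex_comm] at this
  have hlt : α₂ / α₁ < 1 := (div_lt_one h₁).2 h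
  rw [min_sqrt_div_eq_left h₂ h.le, max_eq_left h.le]
  refine ⟨continuousAt_jointTailIndex α₁ α₂ ?_, jointTailIndex_sqrt_div h₁ h₂.le hlt.ne⟩
  rw [sq_sqrt (div_pos h₂ h₁).le]
  exact hlt.ne

end JointTailIndex

/-- **Range of the joint tail index γ(ρ) for the bivariate P-GC model.**
For fixed `α₁, α₂ > 0` and `γ(ρ) = (α₁+α₂−2ρ√(α₁α₂))/(1−ρ²)` on
`ρ ∈ (−1, min(√(α₂/α₁), √(α₁/α₂)))`:
(i) if `ρ < 0` then `γ(ρ) > α₁+α₂`; (ii) if `ρ = 0` then `γ(ρ) = α₁+α₂`;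
(iii) if `0 < ρ < min(√(α₂/α₁), √(α₁/α₂))` then `max(α₁,α₂) < γ(ρ) < α₁+α₂`;
(iv) as `ρ ↑ min(√(α₂/α₁), √(α₁/α₂))`, `γ(ρ) → max(α₁,α₂)`; i.e. when `α₁ ≠ α₂` the
expression at `ρ = min(√(α₂/α₁), √(α₁/α₂))` equals `max(α₁,α₂)`. -/
theorem statement5 (α1 α2 : ℝ) (h1 : 0 < α1) (h2 : 0 < α2) :
    (∀ ρ : ℝ, -1 < ρ → ρ < 0 →
      α1 + α2 < (α1 + α2 - 2 * ρ * Real.sqrt (α1 * α2)) / (1 - ρ ^ 2)) ∧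
    ((α1 + α2 - 2 * (0 : ℝ) * Real.sqrt (α1 * α2)) / (1 - (0 : ℝ) ^ 2) = α1 + α2) ∧
    (∀ ρ : ℝ, 0 < ρ → ρ < min (Real.sqrt (α2 / α1)) (Real.sqrt (α1 / α2)) →
      max α1 α2 < (α1 + α2 - 2 * ρ * Real.sqrt (α1 * α2)) / (1 - ρ ^ 2) ∧
      (α1 + α2 - 2 * ρ * Real.sqrt (α1 * α2)) / (1 - ρ ^ 2) < α1 + α2) ∧
    (α1 ≠ α2 →
      Tendsto (fun ρ : ℝ => (α1 + α2 - 2 * ρ * Real.sqrt (α1 * α2)) / (1 - ρ ^ 2))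
        (nhdsWithin (min (Real.sqrt (α2 / α1)) (Real.sqrt (α1 / α2)))
          (Set.Iio (min (Real.sqrt (α2 / α1)) (Real.sqrt (α1 / α2)))))
        (nhds (max α1 α2)) ∧
      (α1 + α2 - 2 * min (Real.sqrt (α2 / α1)) (Real.sqrt (α1 / α2)) * Real.sqrt (α1 * α2)) /
          (1 - (min (Real.sqrt (α2 / α1)) (Real.sqrt (α1 / α2))) ^ 2) = max α1 α2) := by
  refine ⟨fun ρ hρ₁ hρ₀ => add_lt_jointTailIndex h1 h2 hρ₁ hρ₀, jointTailIndex_zero α1 α2,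
    fun ρ hρ₀ hρ => ?_, fun hne => ?_⟩
  · have hl := mul_sqrt_lt_sqrt_of_lt_sqrt_div h1 (hρ.trans_le (min_le_left _ _))
    have hr := mul_sqrt_lt_sqrt_of_lt_sqrt_div h2 (hρ.trans_le (min_le_right _ _))
    have hρ₁ := sq_lt_one_of_mul_sqrt_lt hρ₀ hl hr
    exact ⟨max_lt (left_lt_jointTailIndex h1.le h2.le hρ₁ hl.ne)
        (right_lt_jointTailIndex h1.le h2.le hρ₁ hr.ne),
      jointTailIndex_lt_add hρ₀ hρ₁ (mul_add_lt_two_sqrt_mul h1 h2 hl hr)⟩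
  · obtain ⟨hcont, hval⟩ := jointTailIndex_min_sqrt_div h1 h2 hne
    exact ⟨hval ▸ hcont.tendsto.mono_left nhdsWithin_le_nhds, hval⟩
end

section
/- Let α̂_1 > 0, α̂_2 > 0, γ̂ > 0. If ρ ∈ (−1,1) with ρ < min(√(α̂_2/α̂_1), √(α̂_1/α̂_2)) satisfies the quadratic equation γ̂ ρ^2 − 2√(α̂_1 α̂_2) ρ + (α̂_1 + α̂_2 − γ̂) = 0, then ρ is uniquely determined and equals (√(α̂_1 α̂_2) − √(α̂_1 α̂_2 + γ̂^2 − γ̂(α̂_1+α̂_2)))/γ̂; in particular the larger root (√(α̂_1 α̂_2) + √(α̂_1 α̂_2 + γ̂^2 − γ̂(α̂_1+α̂_2)))/γ̂ cannot satisfy the constraints. -/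
/-! Multiplied by `γ̂`, the equation reads `(√(α̂₁α̂₂) - γ̂ρ)² = α̂₁α̂₂ + γ̂² - γ̂(α̂₁+α̂₂)`, so `ρ` is
the smaller root exactly when `γ̂ρ ≤ √(α̂₁α̂₂)`. The constraints force this, because the equation gives
`(1 - ρ²)(√(α̂₁α̂₂) - γ̂ρ) = (√α̂₂ - √α̂₁ ρ)(√α̂₁ - √α̂₂ ρ)`, and both factors on the right are positive
when `ρ < min(√(α̂₂/α̂₁), √(α̂₁/α̂₂))`. -/

lemma sq_sub_mul_eq_sq_of_quadratic_eq_zero {g s c ρ : ℝ} (h : g * ρ ^ 2 - 2 * s * ρ + c = 0) :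
    s ^ 2 - g * c = (s - g * ρ) ^ 2 := by
  linear_combination (-g) * h

lemma eq_sub_sqrt_div_of_quadratic_eq_zero {g s c ρ : ℝ} (hg : 0 < g) (hρ : g * ρ ≤ s)
    (h : g * ρ ^ 2 - 2 * s * ρ + c = 0) :
    ρ = (s - Real.sqrt (s ^ 2 - g * c)) / g := by
  rw [sq_sub_mul_eq_sq_of_quadratic_eq_zero h, Real.sqrt_sq (sub_nonneg.mpr hρ), eq_div_iff hg.ne']
  ring

lemma quadratic_eq_zero_add_sqrt_div {g s c ρ : ℝ} (hg : g ≠ 0)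
    (h : g * ρ ^ 2 - 2 * s * ρ + c = 0) :
    g * ((s + Real.sqrt (s ^ 2 - g * c)) / g) ^ 2
      - 2 * s * ((s + Real.sqrt (s ^ 2 - g * c)) / g) + c = 0 := by
  have hD : 0 ≤ s ^ 2 - g * c := sq_sub_mul_eq_sq_of_quadratic_eq_zero h ▸ sq_nonneg _
  field_simp
  linear_combination Real.sq_sqrt hD

lemma sqrt_mul_one_add_sq_sub_pos {a1 a2 ρ : ℝ} (ha1 : 0 < a1) (ha2 : 0 < a2)
    (hlt : ρ < min (Real.sqrt (a2 / a1)) (Real.sqrt (a1 / a2))) :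
    0 < Real.sqrt (a1 * a2) * (1 + ρ ^ 2) - (a1 + a2) * ρ := by
  have hs1 : 0 < Real.sqrt a1 := Real.sqrt_pos.mpr ha1
  have hs2 : 0 < Real.sqrt a2 := Real.sqrt_pos.mpr ha2
  have h1 : Real.sqrt a1 * ρ < Real.sqrt a2 := by
    have := (lt_min_iff.mp hlt).1
    rwa [Real.sqrt_div' _ ha1.le, lt_div_iff₀ hs1, mul_comm] at this
  have h2 : Real.sqrt a2 * ρ < Real.sqrt a1 := by
    have := (lt_min_iff.mp hlt).2
    rwa [Real.sqrt_div' _ ha2.le, lt_div_iff₀ hs2, mul_comm] at this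
  calc 0 < (Real.sqrt a2 - Real.sqrt a1 * ρ) * (Real.sqrt a1 - Real.sqrt a2 * ρ) :=
        mul_pos (sub_pos.mpr h1) (sub_pos.mpr h2)
    _ = Real.sqrt (a1 * a2) * (1 + ρ ^ 2) - (a1 + a2) * ρ := by
        rw [Real.sqrt_mul ha1.le]
        linear_combination (-ρ) * (Real.sq_sqrt ha1.le + Real.sq_sqrt ha2.le)

lemma mul_lt_sqrt_mul_of_feasible {a1 a2 g ρ : ℝ} (ha1 : 0 < a1) (ha2 : 0 < a2)
    (hmem : ρ ∈ Set.Ioo (-1 : ℝ) 1)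
    (hlt : ρ < min (Real.sqrt (a2 / a1)) (Real.sqrt (a1 / a2)))
    (heq : g * ρ ^ 2 - 2 * Real.sqrt (a1 * a2) * ρ + (a1 + a2 - g) = 0) :
    g * ρ < Real.sqrt (a1 * a2) := by
  have hρ : 0 < 1 - ρ ^ 2 := by nlinarith [hmem.1, hmem.2]
  have hgap : (Real.sqrt (a1 * a2) - g * ρ) * (1 - ρ ^ 2)
      = Real.sqrt (a1 * a2) * (1 + ρ ^ 2) - (a1 + a2) * ρ := by
    linear_combination ρ * heq
  have := sqrt_mul_one_add_sq_sub_pos ha1 ha2 hlt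
  rw [← hgap] at this
  exact sub_pos.mp (pos_of_mul_pos_left this hρ.le)

lemma sqrt_mul_sq_sub_mul_eq {a1 a2 g : ℝ} (ha1 : 0 < a1) (ha2 : 0 < a2) :
    Real.sqrt (a1 * a2) ^ 2 - g * (a1 + a2 - g) = a1 * a2 + g ^ 2 - g * (a1 + a2) := by
  rw [Real.sq_sqrt (by positivity)]
  ring

lemma eq_smaller_root_of_feasible {a1 a2 g ρ : ℝ} (ha1 : 0 < a1) (ha2 : 0 < a2) (hg : 0 < g)
    (hmem : ρ ∈ Set.Ioo (-1 : ℝ) 1)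
    (hlt : ρ < min (Real.sqrt (a2 / a1)) (Real.sqrt (a1 / a2)))
    (heq : g * ρ ^ 2 - 2 * Real.sqrt (a1 * a2) * ρ + (a1 + a2 - g) = 0) :
    ρ = (Real.sqrt (a1 * a2) - Real.sqrt (a1 * a2 + g ^ 2 - g * (a1 + a2))) / g := by
  rw [← sqrt_mul_sq_sub_mul_eq ha1 ha2]
  exact eq_sub_sqrt_div_of_quadratic_eq_zero hg
    (mul_lt_sqrt_mul_of_feasible ha1 ha2 hmem hlt heq).le heq

/-- **Uniqueness of the feasible root of the quadratic in ρ.**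
If `ρ ∈ (−1,1)` with `ρ < min(√(α̂₂/α̂₁), √(α̂₁/α̂₂))` satisfies the quadratic equation
`γ̂ ρ² − 2√(α̂₁α̂₂) ρ + (α̂₁ + α̂₂ − γ̂) = 0`, then `ρ` is uniquely determined and equals the
smaller root `(√(α̂₁α̂₂) − √(α̂₁α̂₂ + γ̂² − γ̂(α̂₁+α̂₂)))/γ̂`; in particular the larger root
cannot satisfy the constraints (unless it coincides with the smaller one). -/
theorem statement18 (a1 a2 g : ℝ) (ha1 : 0 < a1) (ha2 : 0 < a2) (hg : 0 < g)
    (ρ : ℝ) (hmem : ρ ∈ Set.Ioo (-1 : ℝ) 1)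
    (hlt : ρ < min (Real.sqrt (a2 / a1)) (Real.sqrt (a1 / a2)))
    (heq : g * ρ ^ 2 - 2 * Real.sqrt (a1 * a2) * ρ + (a1 + a2 - g) = 0) :
    ρ = (Real.sqrt (a1 * a2) - Real.sqrt (a1 * a2 + g ^ 2 - g * (a1 + a2))) / g ∧
    (∀ ρ' : ℝ, ρ' ∈ Set.Ioo (-1 : ℝ) 1 →
      ρ' < min (Real.sqrt (a2 / a1)) (Real.sqrt (a1 / a2)) →
      g * ρ' ^ 2 - 2 * Real.sqrt (a1 * a2) * ρ' + (a1 + a2 - g) = 0 → ρ' = ρ) ∧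
    ((Real.sqrt (a1 * a2) + Real.sqrt (a1 * a2 + g ^ 2 - g * (a1 + a2))) / g ≠ ρ →
      ¬ ((Real.sqrt (a1 * a2) + Real.sqrt (a1 * a2 + g ^ 2 - g * (a1 + a2))) / g
            ∈ Set.Ioo (-1 : ℝ) 1 ∧
          (Real.sqrt (a1 * a2) + Real.sqrt (a1 * a2 + g ^ 2 - g * (a1 + a2))) / g
            < min (Real.sqrt (a2 / a1)) (Real.sqrt (a1 / a2)))) := by
  have hρ := eq_smaller_root_of_feasible ha1 ha2 hg hmem hlt heq
  have huniq : ∀ ρ' : ℝ, ρ' ∈ Set.Ioo (-1 : ℝ) 1 →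
      ρ' < min (Real.sqrt (a2 / a1)) (Real.sqrt (a1 / a2)) →
      g * ρ' ^ 2 - 2 * Real.sqrt (a1 * a2) * ρ' + (a1 + a2 - g) = 0 → ρ' = ρ :=
    fun ρ' hmem' hlt' heq' =>
      (eq_smaller_root_of_feasible ha1 ha2 hg hmem' hlt' heq').trans hρ.symm
  refine ⟨hρ, huniq, fun hne ⟨hmem', hlt'⟩ => hne (huniq _ hmem' hlt' ?_)⟩
  simpa only [sqrt_mul_sq_sub_mul_eq ha1 ha2] using quadratic_eq_zero_add_sqrt_div hg.ne' heq
end
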